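/- arXiv:2507.14410 — 7 statements merged into one kernel-verified Lean document; each statement's English description precedes it below -/
import Mathlib

section
/- If m and n are positive integers with θ_n / p_n = θ_m / p_m, then m = n, where θ_n = ∑_{i=1}^n ln(p_i). -/
/-!
Cross-multiplying, the hypothesis says `p_m θ_n = p_n θ_m`, i.e.
`(p_1 ⋯ p_n) ^ p_m = (p_1 ⋯ p_m) ^ p_n`. If `m < n`, the prime `p_n` divides the left side
but none of the smaller primes `p_1, …, p_m` on the right, so the two sides cannot agree.
-/

noncomputable def p (n : ℕ) : ℕ := Nat.nth Nat.Prime (n - 1)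

noncomputable def θ (n : ℕ) : ℝ := ∑ i ∈ Finset.Icc 1 n, Real.log (p i)

lemma Prime.pow_ne_pow_of_dvd_of_not_dvd {M : Type*} [CommMonoidWithZero M] {q a b : M}
    (hq : Prime q) (ha : q ∣ a) (hb : ¬ q ∣ b) {k : ℕ} (hk : k ≠ 0) (l : ℕ) : a ^ k ≠ b ^ l :=
  fun h => hb (hq.dvd_of_dvd_pow (h ▸ ha.trans (dvd_pow_self a hk)))

lemma p_prime (n : ℕ) : (p n).Prime := Nat.prime_nth_prime _

lemma p_lt_p {i n : ℕ} (hi : 1 ≤ i) (h : i < n) : p i < p n :=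
  (Nat.nth_lt_nth Nat.infinite_setOfPred_prime).mpr (by omega)

noncomputable def primeProd (n : ℕ) : ℕ := ∏ i ∈ Finset.Icc 1 n, p i

lemma θ_eq_log_primeProd (n : ℕ) : θ n = Real.log (primeProd n) := by
  rw [primeProd, Nat.cast_prod, Real.log_prod]
  · rfl
  · exact fun i _ => by exact_mod_cast (p_prime i).ne_zero

lemma p_dvd_primeProd {n : ℕ} (hn : 1 ≤ n) : p n ∣ primeProd n :=
  Finset.dvd_prod_of_mem p (Finset.mem_Icc.mpr ⟨hn, le_rfl⟩)

lemma not_p_dvd_primeProd {m n : ℕ} (h : m < n) : ¬ p n ∣ primeProd m := by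
  rw [primeProd, (p_prime n).prime.dvd_finsetProd_iff]
  rintro ⟨i, hi, hdvd⟩
  rw [Finset.mem_Icc] at hi
  have hlt : p i < p n := p_lt_p hi.1 (by omega)
  exact hlt.ne' ((Nat.prime_dvd_prime_iff_eq (p_prime n) (p_prime i)).mp hdvd)

lemma le_of_primeProd_pow_eq {m n : ℕ} (h : primeProd n ^ p m = primeProd m ^ p n) : n ≤ m := by
  by_contra! hmn
  exact (p_prime n).prime.pow_ne_pow_of_dvd_of_not_dvd (p_dvd_primeProd (by omega))
    (not_p_dvd_primeProd hmn) (p_prime m).ne_zero _ h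

lemma primeProd_pow_eq_of_θ_div_eq {m n : ℕ} (h : θ n / p n = θ m / p m) :
    primeProd n ^ p m = primeProd m ^ p n := by
  have hp (k : ℕ) : (p k : ℝ) ≠ 0 := by exact_mod_cast (p_prime k).ne_zero
  have hpos (k l : ℕ) : (0 : ℝ) < (primeProd k : ℝ) ^ l := by
    have : 0 < primeProd k := Finset.prod_pos fun i _ => (p_prime i).pos
    positivity
  rw [div_eq_div_iff (hp n) (hp m), θ_eq_log_primeProd, θ_eq_log_primeProd] at h
  have hlog : Real.log ((primeProd n : ℝ) ^ p m) = Real.log ((primeProd m : ℝ) ^ p n) := by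
    rw [Real.log_pow, Real.log_pow]
    linarith
  exact_mod_cast Real.log_injOn_pos (hpos n (p m)) (hpos m (p n)) hlog

theorem stmt2 : ∀ m n : ℕ, 1 ≤ m → 1 ≤ n → θ n / (p n : ℝ) = θ m / (p m : ℝ) → m = n :=
  fun _ _ _ _ h => le_antisymm (le_of_primeProd_pow_eq (primeProd_pow_eq_of_θ_div_eq h).symm)
    (le_of_primeProd_pow_eq (primeProd_pow_eq_of_θ_div_eq h))
end

section
/- For all n ≥ 1, θ_n > n(ln n - 1/2), where θ_n = ∑_{i=1}^n ln(p_i). -/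
open Real Finset
open scoped Nat

lemma Nat.nth_prime_add_two_le_nth_prime_succ {k : ℕ} (hk : k ≠ 0) :
    Nat.nth Nat.Prime k + 2 ≤ Nat.nth Nat.Prime (k + 1) := by
  have hlt : Nat.nth Nat.Prime k < Nat.nth Nat.Prime (k + 1) :=
    Nat.nth_strictMono Nat.infinite_setOfPred_prime k.lt_succ_self
  have hge := Nat.add_two_le_nth_prime k
  obtain ⟨a, ha⟩ := (Nat.prime_nth_prime k).odd_of_ne_two (by omega)
  obtain ⟨b, hb⟩ := (Nat.prime_nth_prime (k + 1)).odd_of_ne_two (by omega)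
  omega

lemma Nat.two_mul_add_two_le_nth_prime {k : ℕ} (hk : 4 ≤ k) :
    2 * k + 2 ≤ Nat.nth Nat.Prime k := by
  induction k, hk using Nat.le_induction with
  | base => simp
  | succ k hk ih =>
    have := Nat.nth_prime_add_two_le_nth_prime_succ (k := k) (by omega)
    omega

lemma two_mul_le_p {i : ℕ} (hi : 5 ≤ i) : 2 * i ≤ p i := by
  have := Nat.two_mul_add_two_le_nth_prime (k := i - 1) (by omega)
  unfold p
  omega

lemma p_pos (i : ℕ) : 0 < p i := (Nat.prime_nth_prime _).pos

-- `35/64 = 210/384 = (2·3·5·7)/(2⁴·4!)`: the bound is an equality at `n = 4`.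
lemma two_pow_mul_factorial_le_prod_p (n : ℕ) :
    35 * (2 ^ n * n !) ≤ 64 * ∏ i ∈ Icc 1 n, p i := by
  induction n with
  | zero => simp
  | succ n ih =>
    by_cases hn : n ≤ 3
    · interval_cases n <;> simp [prod_Icc_succ_top, p, Nat.factorial]
    · rw [prod_Icc_succ_top (by omega), pow_succ, Nat.factorial_succ]
      have := two_mul_le_p (i := n + 1) (by omega)
      calc 35 * (2 ^ n * 2 * ((n + 1) * n !)) = 35 * (2 ^ n * n !) * (2 * (n + 1)) := by ring
        _ ≤ (64 * ∏ i ∈ Icc 1 n, p i) * p (n + 1) := by gcongr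
        _ = _ := by ring

lemma θ_eq_log_prod (n : ℕ) : θ n = log (∏ i ∈ Icc 1 n, (p i : ℝ)) := by
  rw [θ, log_prod]
  exact fun i _ => by exact_mod_cast (p_pos i).ne'

lemma log_factorial_le_θ (n : ℕ) : log 35 + n * log 2 + log n ! ≤ log 64 + θ n := by
  have hprod : 0 < ∏ i ∈ Icc 1 n, (p i : ℝ) := prod_pos fun i _ => by exact_mod_cast p_pos i
  have hcast : (35 : ℝ) * (2 ^ n * n !) ≤ 64 * ∏ i ∈ Icc 1 n, (p i : ℝ) := by
    exact_mod_cast two_pow_mul_factorial_le_prod_p n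
  have := log_le_log (by positivity) hcast
  rwa [log_mul (by norm_num) (by positivity), log_mul (by positivity) (by positivity), log_pow,
    log_mul (by norm_num) hprod.ne', ← θ_eq_log_prod, ← add_assoc] at this

lemma two_mul_log_sixtyFour_le : 2 * log 64 ≤ log (2 * π) + 2 * log 35 := by
  calc 2 * log 64 = log (64 ^ 2) := by rw [log_pow]; norm_num
    _ ≤ log (2 * π * 35 ^ 2) := log_le_log (by norm_num) (by nlinarith [pi_gt_three])
    _ = log (2 * π) + 2 * log 35 := by rw [log_mul (by positivity) (by norm_num), log_pow]; norm_num

theorem stmt6 : ∀ n : ℕ, 1 ≤ n → θ n > (n : ℝ) * (Real.log n - 1/2) := by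
  intro n hn
  have hstirling := Stirling.le_log_factorial_stirling (n := n) (by omega)
  have hn1 : (1 : ℝ) ≤ n := by exact_mod_cast hn
  nlinarith [log_factorial_le_θ n, log_natCast_nonneg n, log_two_gt_d9, two_mul_log_sixtyFour_le]
end

section
/- For all n ≥ 13, θ_n ≥ n ln n, where θ_n = ∑_{i=1}^n ln(p_i). -/
/-
Taking logarithms, it suffices that `∏_{i ≤ n} p_i ≥ n ^ n`, which goes by induction from `n = 13`,
where it is a computation (and barely true: `13 ^ 13 ≈ 3.03·10¹⁴` against `3.04·10¹⁴`). The step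
`n ↦ n + 1` needs `(n + 1) ^ n ≤ 3 n ^ n`, i.e. `(1 + 1/n) ^ n ≤ e < 3`, and `p_{n+1} ≥ 3 (n + 1)`,
which follows from a sieve modulo 30 bounding `π(3k) < k` for `k ≥ 14`.
-/

open Finset

set_option maxRecDepth 10000

lemma Nat.count_prime_three_mul_lt {k : ℕ} (hk : 14 ≤ k) : Nat.count Nat.Prime (3 * k) < k := by
  rcases le_or_gt k 53 with hsmall | hlarge
  · exact (by decide : ∀ k ∈ Icc 14 53, Nat.count Nat.Prime (3 * k) < k) k (mem_Icc.2 ⟨hk, hsmall⟩)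
  · -- among 30 consecutive integers at most φ 30 = 8 are coprime to 30
    have hsieve := Nat.primeCounting'_add_le (a := 30) (k := 31) (by norm_num) (by norm_num) (3 * k - 31)
    rw [show 31 + (3 * k - 31) = 3 * k by omega] at hsieve
    have h31 : Nat.count Nat.Prime 31 = 10 := by decide
    have h30 : Nat.totient 30 = 8 := by decide
    simp only [Nat.primeCounting', h31, h30] at hsieve
    omega

lemma three_mul_le_p {k : ℕ} (hk : 14 ≤ k) : 3 * k ≤ p k :=
  (Nat.count_le_iff_le_nth Nat.infinite_setOfPred_prime).1 <|
    Nat.le_sub_one_of_lt (Nat.count_prime_three_mul_lt hk)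

lemma add_one_pow_le_three_mul_pow (n : ℕ) : (n + 1) ^ n ≤ 3 * n ^ n := by
  rcases Nat.eq_zero_or_pos n with rfl | hn
  · norm_num
  have hreal : ((n : ℝ) + 1) ^ n ≤ 3 * (n : ℝ) ^ n :=
    calc ((n : ℝ) + 1) ^ n = (n : ℝ) ^ n * (1 + (n : ℝ)⁻¹) ^ n := by
          rw [← mul_pow, mul_add, mul_inv_cancel₀ (by positivity), mul_one]
      _ ≤ (n : ℝ) ^ n * Real.exp 1 := by gcongr; exact Real.one_add_inv_pow_le_exp
      _ ≤ 3 * (n : ℝ) ^ n := by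
          rw [mul_comm]; gcongr; exact Real.exp_one_lt_three.le
  exact_mod_cast hreal

def firstThirteenPrimes : List ℕ := [2, 3, 5, 7, 11, 13, 17, 19, 23, 29, 31, 37, 41]

lemma prod_p_thirteen : ∏ i ∈ Icc 1 13, p i = 304250263527210 := by
  have hp : ∀ i ∈ Icc 1 13, p i = firstThirteenPrimes.getD (i - 1) 0 := by
    intro i hi
    obtain ⟨hcount, hprime⟩ : Nat.count Nat.Prime (firstThirteenPrimes.getD (i - 1) 0) = i - 1 ∧
        (firstThirteenPrimes.getD (i - 1) 0).Prime := by
      revert i; decide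
    rw [p, ← hcount, Nat.nth_count hprime, hcount]
  rw [prod_congr rfl hp]
  decide

lemma pow_self_le_prod_p {n : ℕ} (hn : 13 ≤ n) : n ^ n ≤ ∏ i ∈ Icc 1 n, p i := by
  induction n, hn using Nat.le_induction with
  | base => rw [prod_p_thirteen]; norm_num
  | succ n hn ih =>
    rw [prod_Icc_succ_top (by omega)]
    calc (n + 1) ^ (n + 1) = (n + 1) ^ n * (n + 1) := pow_succ _ _
      _ ≤ 3 * n ^ n * (n + 1) := by gcongr; exact add_one_pow_le_three_mul_pow n
      _ = n ^ n * (3 * (n + 1)) := by ring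
      _ ≤ (∏ i ∈ Icc 1 n, p i) * p (n + 1) := by gcongr; exact three_mul_le_p (by omega)

theorem stmt7 : ∀ n : ℕ, 13 ≤ n → θ n ≥ (n : ℝ) * Real.log n := by
  intro n hn
  have hp : ∀ i ∈ Icc 1 n, (p i : ℝ) ≠ 0 := fun i _ =>
    Nat.cast_ne_zero.2 (Nat.prime_nth_prime _).ne_zero
  have hprod : (n : ℝ) ^ n ≤ ∏ i ∈ Icc 1 n, (p i : ℝ) := by
    exact_mod_cast pow_self_le_prod_p hn
  rw [θ, ← Real.log_prod hp, ← Real.log_pow]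
  exact Real.log_le_log (by positivity) hprod
end

section
/- For all n ≥ 3, θ_n ≤ n ln(n ln n), where θ_n = ∑_{i=1}^n ln(p_i). -/
/-
Chebyshev's lower bound `ψ x ≥ x log 2 - log (x + 1)`, taken at `x = p k - 1` where
`π x = k - 1`, gives `(p k - 1) log 2 ≤ k log (p k)`. Bootstrapping this (first `p k ≤ 9 k²`,
then `p n ≤ 3 n log 3n`) yields `log (p n) ≤ (16/9) log n - 0.07` for `n ≥ 60`, hence
`p i ≤ 2.58 i log n` for `10 ≤ i ≤ n`. Summing the logarithms,
`θ n ≤ log n! + n log log n + n log 2.58 + O(log n)`, and Stirling's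
`log n! ≤ n log n - n + (log n) / 2 + 1` finishes the proof because `log 2.58 < 1`.
For `3 ≤ n < 60` we have `θ n = log (p n)#` and the inequality is checked by computation.
-/

open Real Finset

open scoped Nat

lemma prime_p (k : ℕ) : (p k).Prime := Nat.prime_nth_prime _

lemma p_mono : Monotone p := fun _ _ h ↦
  Nat.nth_monotone Nat.infinite_setOfPred_prime (Nat.sub_le_sub_right h 1)

lemma primeCounting_p {k : ℕ} (hk : 1 ≤ k) : Nat.primeCounting (p k) = k := by
  change Nat.count Nat.Prime (p k + 1) = k
  rw [p, Nat.count_nth_succ_of_infinite Nat.infinite_setOfPred_prime, Nat.sub_add_cancel hk]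

lemma primeCounting_p_sub_one (k : ℕ) : Nat.primeCounting (p k - 1) = k - 1 := by
  rw [Nat.primeCounting_sub_one, p, Nat.primeCounting'_nth_eq]

lemma log_le_div_add_log_sub_one {x c : ℝ} (hx : 0 < x) (hc : 0 < c) :
    log x ≤ x / c + log c - 1 := by
  have := log_le_sub_one_of_pos (div_pos hx hc)
  rw [log_div hx.ne' hc.ne'] at this
  linarith

lemma four_le_log {x : ℝ} (hx : 60 ≤ x) : 4 ≤ log x := by
  rw [le_log_iff_exp_le (by linarith)]
  calc exp 4 = exp 1 ^ 4 := by rw [exp_one_pow]; norm_num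
    _ ≤ 2.7182818286 ^ 4 := by gcongr; exact exp_one_lt_d9.le
    _ ≤ x := by linarith

lemma sum_Icc_one_eq_add_sum_Ioc {M : Type*} [AddCommMonoid M] (f : ℕ → M) {m n : ℕ}
    (h : m ≤ n) : ∑ i ∈ Icc 1 n, f i = ∑ i ∈ Icc 1 m, f i + ∑ i ∈ Ioc m n, f i := by
  have hIcc (k : ℕ) : Icc 1 k = Ioc 0 k := Finset.Icc_add_one_left_eq_Ioc 0 k
  rw [hIcc, hIcc, sum_Ioc_consecutive f (Nat.zero_le m) h]

lemma log_factorial_eq_sum_log (n : ℕ) : log n ! = ∑ i ∈ Icc 1 n, log i := by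
  rw [← Finset.prod_Ico_id_eq_factorial, Finset.Ico_add_one_right_eq_Icc, Nat.cast_prod,
    log_prod fun i hi ↦ by have := (mem_Icc.1 hi).1; positivity]

lemma log_factorial_le (n : ℕ) : log n ! ≤ n * log n - n + log n / 2 + 1 := by
  rcases Nat.eq_zero_or_pos n with rfl | hn
  · simp
  obtain ⟨m, rfl⟩ := Nat.exists_eq_add_of_le' hn
  have hS := log_le_log (Stirling.stirlingSeq'_pos m)
    (Stirling.stirlingSeq'_antitone (Nat.zero_le m))
  simp only [Function.comp_apply, Stirling.stirlingSeq_one] at hS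
  rw [Stirling.log_stirlingSeq_formula, log_div (exp_pos 1).ne' (by positivity), log_exp,
    log_mul two_ne_zero (by positivity), log_sqrt zero_le_two,
    log_div (by positivity) (by positivity), log_exp] at hS
  linarith

lemma prod_range_nth_prime (k : ℕ) :
    ∏ j ∈ range k, Nat.nth Nat.Prime j =
      ∏ q ∈ range (Nat.nth Nat.Prime k) with q.Prime, q := by
  induction k with
  | zero => simp [Nat.nth_prime_zero_eq_two]; decide
  | succ k ih =>
    rw [prod_range_succ, ih,
      Nat.filter_range_nth_eq_insert_of_infinite Nat.infinite_setOfPred_prime,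
      prod_insert (by simp), mul_comm]

lemma primorial_nth_prime (k : ℕ) :
    primorial (Nat.nth Nat.Prime k) = ∏ j ∈ range (k + 1), Nat.nth Nat.Prime j := by
  rw [prod_range_nth_prime, Nat.filter_range_nth_eq_insert_of_infinite Nat.infinite_setOfPred_prime,
    primorial, range_add_one, filter_insert, if_pos (Nat.prime_nth_prime k)]

lemma θ_eq_log_primorial {n : ℕ} (hn : 1 ≤ n) : θ n = log (primorial (p n)) := by
  have hprod : ∏ i ∈ Icc 1 n, p i = primorial (p n) := by
    rw [p, primorial_nth_prime, Nat.sub_add_cancel hn, range_eq_Ico,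
      ← Finset.Ico_add_one_right_eq_Icc, ← Finset.prod_Ico_add' p 0 n 1]
    rfl
  rw [θ, ← hprod, Nat.cast_prod, log_prod fun i _ ↦ mod_cast (prime_p i).ne_zero]

lemma p_nine : p 9 = 23 := Nat.nth_count (p := Nat.Prime) (n := 23) (by norm_num)

lemma θ_nine_le : θ 9 ≤ log 9 ! + 10 * log 2 := by
  have h : (primorial 23 : ℝ) ≤ 9 ! * 2 ^ 10 :=
    mod_cast (by decide : primorial 23 ≤ 9 ! * 2 ^ 10)
  have := log_le_log (mod_cast primorial_pos 23) h
  rwa [log_mul (by positivity) (by positivity), log_pow, Nat.cast_ofNat, ← p_nine,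
    ← θ_eq_log_primorial (by norm_num)] at this

lemma p_lt_of_lt_sixty {n : ℕ} (hn : n < 60) : p n < 278 :=
  Nat.nth_lt_of_lt_count (by rw [show Nat.count Nat.Prime 278 = 59 by decide +kernel]; omega)

-- `6931 / 160000 < log 2 / 16`, so `2 ^ c ≤ n ^ 16` makes `6931 c / 160000` a lower bound
-- for `log n`.
lemma primorial_mul_pow_le_pow_of_lt_278 : ∀ x < 278, x.Prime → 3 ≤ Nat.primeCounting x →
    primorial x * 160000 ^ Nat.primeCounting x ≤
      (6931 * Nat.log 2 (Nat.primeCounting x ^ 16) * Nat.primeCounting x) ^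
        Nat.primeCounting x := by
  decide +kernel

lemma log_le_mul_log_mul_log_of_pow_le {N n c : ℕ} (hN : 0 < N) (hc : 2 ^ c ≤ n ^ 16)
    (h : N * 160000 ^ n ≤ (6931 * c * n) ^ n) : log N ≤ n * log (n * log n) := by
  have hc' : c * log 2 ≤ 16 * log n := by
    have := log_le_log (by positivity) (by exact_mod_cast hc : (2 : ℝ) ^ c ≤ (n : ℝ) ^ 16)
    rwa [log_pow, log_pow, Nat.cast_ofNat] at this
  have hlog : 6931 * c / 160000 ≤ log n := by
    nlinarith [mul_le_mul_of_nonneg_left log_two_gt_d9.le (Nat.cast_nonneg c : (0 : ℝ) ≤ c)]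
  have hN' : (N : ℝ) ≤ (n * (6931 * c / 160000)) ^ n := by
    have h' : (N : ℝ) * 160000 ^ n ≤ (6931 * c * n) ^ n := by exact_mod_cast h
    rw [← le_div_iff₀ (by positivity), ← div_pow] at h'
    exact h'.trans_eq (by ring)
  calc log N ≤ log ((n * log n) ^ n) :=
        log_le_log (by positivity) (hN'.trans (pow_le_pow_left₀ (by positivity) (by gcongr) n))
    _ = n * log (n * log n) := log_pow _ _

lemma θ_le_of_lt_sixty {n : ℕ} (h3 : 3 ≤ n) (h60 : n < 60) : θ n ≤ n * log (n * log n) := by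
  have hπ := primeCounting_p (by omega : 1 ≤ n)
  have h := primorial_mul_pow_le_pow_of_lt_278 (p n) (p_lt_of_lt_sixty h60) (prime_p n) (by omega)
  rw [hπ] at h
  rw [θ_eq_log_primorial (by omega)]
  exact log_le_mul_log_mul_log_of_pow_le (primorial_pos _) (Nat.pow_log_le_self 2 (by positivity)) h

lemma sub_one_mul_log_two_le {k : ℕ} (hk : 1 ≤ k) :
    ((p k : ℝ) - 1) * log 2 ≤ k * log (p k) := by
  have hp : (2 : ℝ) ≤ p k := mod_cast (prime_p k).two_le
  have hψ := (Chebyshev.psi_ge (p k - 1)).trans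
    (Chebyshev.psi_le_primeCounting_mul_log (p k - 1))
  rw [primeCounting_p_sub_one, Nat.cast_sub (prime_p k).one_le, Nat.cast_sub hk, Nat.cast_one,
    sub_add_cancel] at hψ
  have hlog : log ((p k : ℝ) - 1) ≤ log (p k) := log_le_log (by linarith) (by linarith)
  have hk' : (0 : ℝ) ≤ k - 1 := by rw [sub_nonneg]; exact_mod_cast hk
  nlinarith [mul_le_mul_of_nonneg_left hlog hk']

lemma p_le_nine_mul_sq {k : ℕ} (hk : 1 ≤ k) : (p k : ℝ) ≤ 9 * k ^ 2 := by
  by_contra! h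
  have hk' : (1 : ℝ) ≤ k := by exact_mod_cast hk
  set s := √(p k : ℝ)
  have hs2 : s ^ 2 = p k := sq_sqrt (Nat.cast_nonneg _)
  have hs : 3 * k < s := by nlinarith [sqrt_nonneg (p k : ℝ)]
  have hlog : log (p k : ℝ) ≤ 2 * (s - 1) := by
    rw [← hs2, log_pow, Nat.cast_ofNat]
    linarith [log_le_sub_one_of_pos (by linarith : 0 < s)]
  have h1 : ((p k : ℝ) - 1) * log 2 < 2 / 3 * (s ^ 2 - s) := by
    calc ((p k : ℝ) - 1) * log 2 ≤ k * log (p k) := sub_one_mul_log_two_le hk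
      _ ≤ k * (2 * (s - 1)) := by gcongr
      _ < 2 / 3 * (s ^ 2 - s) := by nlinarith
  rw [← hs2] at h1
  nlinarith [mul_le_mul_of_nonneg_left log_two_gt_d9.le (by nlinarith : (0 : ℝ) ≤ s ^ 2 - 1)]

lemma p_le_three_mul_log {n : ℕ} (hn : 60 ≤ n) : (p n : ℝ) ≤ 3 * n * log (3 * n) := by
  have hn' : (60 : ℝ) ≤ n := by exact_mod_cast hn
  have h4 : 4 ≤ log (3 * n : ℝ) := four_le_log (by linarith)
  have hlog : log (p n : ℝ) ≤ 2 * log (3 * n) := by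
    have h := log_le_log (by exact_mod_cast (prime_p n).pos) (p_le_nine_mul_sq (by omega : 1 ≤ n))
    rwa [show (9 : ℝ) * n ^ 2 = (3 * n) ^ 2 by ring, log_pow, Nat.cast_ofNat] at h
  nlinarith [sub_one_mul_log_two_le (by omega : 1 ≤ n), log_two_gt_d9,
    mul_le_mul_of_nonneg_left hlog (by positivity : (0 : ℝ) ≤ n),
    mul_le_mul_of_nonneg_left h4 (by positivity : (0 : ℝ) ≤ n)]

lemma log_p_le {n : ℕ} (hn : 60 ≤ n) : log (p n) ≤ 16 / 9 * log n - 0.07 := by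
  have h4 := four_le_log (by exact_mod_cast hn : (60 : ℝ) ≤ n)
  have hlog3n : log (3 * n : ℝ) = log 3 + log n := log_mul (by norm_num) (by positivity)
  have hL : 0 < log (3 * n : ℝ) := by linarith [log_pos (by norm_num : (1 : ℝ) < 3)]
  have hloglog := log_le_div_add_log_sub_one hL (by norm_num : (0 : ℝ) < 2 ^ 2)
  rw [log_pow] at hloglog
  have h := log_le_log (by exact_mod_cast (prime_p n).pos) (p_le_three_mul_log hn)
  rw [log_mul (by positivity) hL.ne'] at h
  linarith [log_three_lt_d9, log_two_lt_d9]

-- `2.58 > 16 / (9 log 2)`, while `log 2.58 < 1` leaves room in the final estimate.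
lemma p_le_mul_log {i n : ℕ} (hn : 60 ≤ n) (hi : 10 ≤ i) (hin : i ≤ n) :
    (p i : ℝ) ≤ 2.58 * i * log n := by
  have hi' : (10 : ℝ) ≤ i := by exact_mod_cast hi
  have hlog : log (p i : ℝ) ≤ log (p n) :=
    log_le_log (by exact_mod_cast (prime_p i).pos) (by exact_mod_cast p_mono hin)
  have h : (p i : ℝ) * log 2 ≤ 16 / 9 * (i * log n) := by
    nlinarith [sub_one_mul_log_two_le (by omega : 1 ≤ i), log_p_le hn, log_two_lt_d9,
      mul_le_mul_of_nonneg_left hlog (by positivity : (0 : ℝ) ≤ i)]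
  have hpos : 0 ≤ (i : ℝ) * log n :=
    mul_nonneg (by positivity) (log_nonneg (by exact_mod_cast (by omega : 1 ≤ n)))
  nlinarith [log_two_gt_d9, log_two_lt_d9]

lemma θ_le_log_factorial_add {n : ℕ} (hn : 60 ≤ n) :
    θ n ≤ log n ! + 10 * log 2 + (n - 9) * (log (log n) + log 2.58) := by
  have hlogn : 0 < log (n : ℝ) := by
    linarith [four_le_log (by exact_mod_cast hn : (60 : ℝ) ≤ n)]
  have hpt : ∀ i ∈ Ioc 9 n, log (p i : ℝ) ≤ log i + (log (log n) + log 2.58) := by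
    intro i hi
    obtain ⟨hi9, hin⟩ := mem_Ioc.1 hi
    have h := log_le_log (by exact_mod_cast (prime_p i).pos) (p_le_mul_log hn hi9 hin)
    rw [log_mul (by positivity) hlogn.ne', log_mul (by norm_num) (by positivity)] at h
    linarith
  have hsum : ∑ i ∈ Ioc 9 n, log (p i : ℝ) ≤
      ∑ i ∈ Ioc 9 n, (log i + (log (log n) + log 2.58)) :=
    sum_le_sum hpt
  rw [sum_add_distrib, sum_const, Nat.card_Ioc, nsmul_eq_mul, Nat.cast_sub (by omega)] at hsum
  calc θ n = θ 9 + ∑ i ∈ Ioc 9 n, log (p i : ℝ) := by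
        rw [θ, θ, sum_Icc_one_eq_add_sum_Ioc _ (by omega : 9 ≤ n)]
    _ ≤ log 9 ! + 10 * log 2 +
          (∑ i ∈ Ioc 9 n, log (i : ℝ) + (n - 9) * (log (log n) + log 2.58)) := by
        gcongr
        · exact θ_nine_le
        · exact_mod_cast hsum
    _ = log n ! + 10 * log 2 + (n - 9) * (log (log n) + log 2.58) := by
        rw [log_factorial_eq_sum_log n, sum_Icc_one_eq_add_sum_Ioc _ (by omega : 9 ≤ n),
          ← log_factorial_eq_sum_log]
        ring

lemma θ_le_of_sixty_le {n : ℕ} (hn : 60 ≤ n) : θ n ≤ n * log (n * log n) := by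
  have h4 := four_le_log (by exact_mod_cast hn : (60 : ℝ) ≤ n)
  have hloglog : 0 ≤ log (log (n : ℝ)) := log_nonneg (by linarith)
  have hlogn := log_le_div_add_log_sub_one (x := n) (c := 2 ^ 4) (by positivity) (by norm_num)
  rw [log_pow] at hlogn
  have hc : log 2.58 ≤ 0.95 := by
    have := log_le_log (by norm_num) (show (2.58 : ℝ) ^ 100 ≤ 2 ^ 137 by norm_num)
    rw [log_pow, log_pow] at this
    push_cast at this
    linarith [log_two_lt_d9]
  have hn9 : (0 : ℝ) ≤ n - 9 := by
    rw [sub_nonneg]; exact_mod_cast (by omega : 9 ≤ n)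
  rw [log_mul (by positivity) (by linarith)]
  linarith [θ_le_log_factorial_add hn, log_factorial_le n, log_two_lt_d9,
    mul_le_mul_of_nonneg_left hc hn9, mul_nonneg hn9 hloglog]

theorem stmt8 : ∀ n : ℕ, 3 ≤ n → θ n ≤ (n : ℝ) * Real.log ((n : ℝ) * Real.log n) := by
  intro n hn
  rcases lt_or_ge n 60 with h60 | h60
  · exact θ_le_of_lt_sixty hn h60
  · exact θ_le_of_sixty_le h60
end

section
/- θ-analogue of the Andrica conjecture: for all n ≥ 1, √θ_{n+1} - √θ_n < 1, where θ_n = ∑_{i=1}^n ln(p_i). -/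
/-!
Since `θ_{n+1} = θ_n + log p_{n+1}`, it suffices to show `log p_{n+1} < 2 √θ_n + 1`. This holds
for any nonnegative nondecreasing sequence `x` with `x₀ < 1` and increments at most `c < 1`
(here `x_i = log p_{i+1}` and `c = log 2`, by Bertrand's postulate). With `t = √(x₀ + ⋯ + x_{n-1})`
and `t < k ≤ t + 1`, the last `k` terms of the sum are at least `x_{n-k}`, so `k x_{n-k} ≤ t²` and
`x_{n-k} ≤ t`; then `x_n ≤ x_{n-k} + k c < 2t + 1`. If `n ≤ t`, one uses `x_n ≤ x₀ + n c` instead.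
-/

open Finset Real

section SlowlyIncreasing

variable {x : ℕ → ℝ} {c : ℝ}

theorem le_add_mul_of_forall_succ_le_add (hstep : ∀ i, x (i + 1) ≤ x i + c) (m k : ℕ) :
    x (m + k) ≤ x m + k * c := by
  induction k with
  | zero => simp
  | succ k ih =>
    rw [← add_assoc]
    push_cast
    linarith [hstep (m + k)]

theorem card_mul_le_sum_range (hx : Monotone x) (h0 : 0 ≤ x 0) {k n : ℕ} (hk : k ≤ n) :
    k * x (n - k) ≤ ∑ i ∈ range n, x i := by
  rw [← sum_range_add_sum_Ico x (n.sub_le k)]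
  have htail : k * x (n - k) ≤ ∑ i ∈ Ico (n - k) n, x i := by
    simpa [Nat.sub_sub_self hk] using
      card_nsmul_le_sum (Ico (n - k) n) x (x (n - k)) fun i hi => hx (mem_Ico.mp hi).1
  have hhead : 0 ≤ ∑ i ∈ range (n - k), x i :=
    sum_nonneg fun i _ => h0.trans (hx i.zero_le)
  linarith

theorem lt_two_mul_sqrt_sum_range_add_one (hx : Monotone x) (h0 : 0 ≤ x 0) (h1 : x 0 < 1)
    (hstep : ∀ i, x (i + 1) ≤ x i + c) (hc : c < 1) (n : ℕ) :
    x n < 2 * √(∑ i ∈ range n, x i) + 1 := by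
  set t := √(∑ i ∈ range n, x i)
  have ht : 0 ≤ t := sqrt_nonneg _
  have hc0 : 0 ≤ c := by linarith [hx (Nat.le_succ 0), hstep 0]
  rcases le_or_gt (n : ℝ) t with hnt | htn
  · have hfirst := le_add_mul_of_forall_succ_le_add hstep 0 n
    rw [zero_add] at hfirst
    nlinarith
  · set k := ⌊t⌋₊ + 1
    have htk : t < k := by push_cast [k]; exact Nat.lt_floor_add_one t
    have hkt : (k : ℝ) ≤ t + 1 := by push_cast [k]; linarith [Nat.floor_le ht]
    have hkn : k ≤ n := (Nat.floor_lt ht).mpr htn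
    have hsum : k * x (n - k) ≤ t ^ 2 := by
      rw [sq_sqrt (sum_nonneg fun i _ => h0.trans (hx i.zero_le))]
      exact card_mul_le_sum_range hx h0 hkn
    have hlow : x (n - k) ≤ t := by nlinarith
    have hlast := le_add_mul_of_forall_succ_le_add hstep (n - k) k
    rw [Nat.sub_add_cancel hkn] at hlast
    nlinarith

end SlowlyIncreasing

theorem sqrt_add_sub_sqrt_lt_one {a b : ℝ} (ha : 0 ≤ a) (hb : b < 2 * √a + 1) :
    √(a + b) - √a < 1 := by
  rw [sub_lt_iff_lt_add', sqrt_lt' (by positivity)]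
  nlinarith [sq_sqrt ha]

theorem Nat.nth_prime_succ_le_two_mul (n : ℕ) :
    Nat.nth Nat.Prime (n + 1) ≤ 2 * Nat.nth Nat.Prime n := by
  obtain ⟨q, hq, hlt, hle⟩ :=
    Nat.exists_prime_lt_and_le_two_mul _ (Nat.prime_nth_prime n).ne_zero
  refine le_trans ?_ hle
  refine (Nat.isLeast_nth_of_infinite Nat.infinite_setOfPred_prime (n + 1)).2 ⟨hq, fun k hk => ?_⟩
  exact (Nat.nth_monotone Nat.infinite_setOfPred_prime (Nat.lt_succ_iff.mp hk)).trans_lt hlt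

theorem monotone_log_nth_prime : Monotone fun i => log (Nat.nth Nat.Prime i) := fun _ _ h =>
  log_le_log (by exact_mod_cast (Nat.prime_nth_prime _).pos)
    (by exact_mod_cast Nat.nth_monotone Nat.infinite_setOfPred_prime h)

theorem log_nth_prime_succ_le (i : ℕ) :
    log (Nat.nth Nat.Prime (i + 1)) ≤ log (Nat.nth Nat.Prime i) + log 2 := by
  rw [add_comm (log _), ← log_mul two_ne_zero (by exact_mod_cast (Nat.prime_nth_prime i).ne_zero)]
  exact log_le_log (by exact_mod_cast (Nat.prime_nth_prime _).pos)
    (by exact_mod_cast Nat.nth_prime_succ_le_two_mul i)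

theorem θ_eq_sum_range (n : ℕ) : θ n = ∑ i ∈ range n, log (Nat.nth Nat.Prime i) := by
  rw [θ, ← Finset.Ico_add_one_right_eq_Icc, sum_Ico_eq_sum_range]
  simp [p, add_comm 1]

theorem stmt13 : ∀ n : ℕ, 1 ≤ n → Real.sqrt (θ (n+1)) - Real.sqrt (θ n) < 1 := by
  intro n _
  have hlog2 : log 2 < 1 := by linarith [log_two_lt_d9]
  have hx0 : log (Nat.nth Nat.Prime 0) = log 2 := by rw [Nat.nth_prime_zero_eq_two]; norm_num
  rw [θ_eq_sum_range, θ_eq_sum_range, sum_range_succ]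
  refine sqrt_add_sub_sqrt_lt_one
    (sum_nonneg fun i _ => log_natCast_nonneg _) ?_
  exact lt_two_mul_sqrt_sum_range_add_one monotone_log_nth_prime (hx0 ▸ log_nonneg one_le_two)
    (hx0 ▸ hlog2) log_nth_prime_succ_le hlog2 n
end

section
/- θ-analogue of the Oppermann conjecture: for every integer m ≥ 2 there exists n with (m - 1/2)² < θ_n ≤ m², and there exists n with m² < θ_n ≤ (m + 1/2)², where θ_n = ∑_{i=1}^n ln(p_i). -/
open Real

lemma log_le_div_exp_one {u : ℝ} (hu : 0 < u) : log u ≤ u / exp 1 := by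
  have h := add_one_le_exp (log u - 1)
  rw [exp_sub, exp_log hu] at h
  linarith

lemma log_le_of_pow_le_two_pow {x : ℝ} {t A : ℕ} (hx : 0 < x) (ht : t ≠ 0)
    (h : x ^ t ≤ 2 ^ A) : log x ≤ A / t * log 2 := by
  have h' : t * log x ≤ A * log 2 := by
    rw [← log_pow, ← log_pow]
    exact log_le_log (by positivity) h
  rw [div_mul_eq_mul_div, le_div_iff₀ (by positivity)]
  linarith

lemma le_log_of_two_pow_le_pow {P s B : ℕ} (hs : s ≠ 0) (h : 2 ^ B ≤ P ^ s) :
    B / s * log 2 ≤ log P := by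
  have hP : 0 < P := Nat.pos_of_ne_zero (by rintro rfl; simp [zero_pow hs] at h)
  have h' : B * log 2 ≤ s * log P := by
    rw [← log_pow, ← log_pow]
    exact log_le_log (by positivity) (by exact_mod_cast h)
  rw [div_mul_eq_mul_div, div_le_iff₀ (by positivity)]
  linarith

/-- The exponents certify `log b ≤ (A / t) log 2` and `(B / s) log 2 ≤ log P`; the last
hypothesis is then a rational inequality, using `0.6931471803 < log 2 < 0.6931471808`. -/
lemma sq_log_sub_quarter_le_log {x : ℝ} {b P t A s B : ℕ} (hx : 2 ≤ x) (hxb : x ≤ b)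
    (ht : t ≠ 0) (hs : s ≠ 0) (hbA : b ^ t ≤ 2 ^ A) (hPB : 2 ^ B ≤ P ^ s)
    (hAB : ((A : ℝ) / t * 0.6931471808 - 1 / 4) ^ 2 ≤ (B : ℝ) / s * 0.6931471803) :
    (log x - 1 / 4) ^ 2 ≤ log P := by
  have hxA : x ^ t ≤ 2 ^ A := by
    calc x ^ t ≤ (b : ℝ) ^ t := by gcongr
      _ ≤ 2 ^ A := by exact_mod_cast hbA
  have hup := log_le_of_pow_le_two_pow (by linarith) ht hxA
  have hlow := le_log_of_two_pow_le_pow hs hPB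
  have hquarter : 1 / 4 ≤ log x := by
    linarith [log_le_log two_pos hx, log_two_gt_d9]
  calc (log x - 1 / 4) ^ 2 ≤ ((A : ℝ) / t * 0.6931471808 - 1 / 4) ^ 2 := by
        gcongr
        exact hup.trans (mul_le_mul_of_nonneg_left log_two_lt_d9.le (by positivity))
    _ ≤ (B : ℝ) / s * 0.6931471803 := hAB
    _ ≤ log P := by nlinarith [log_two_gt_d9, (by positivity : (0 : ℝ) ≤ (B : ℝ) / s)]

lemma log_primorial_le_theta {a N : ℕ} (h : a ≤ N) :
    log (primorial a) ≤ Chebyshev.theta N := by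
  have := Chebyshev.theta_mono (Nat.cast_le.mpr h : (a : ℝ) ≤ N)
  rwa [Chebyshev.theta_eq_log_primorial, Nat.floor_natCast] at this

lemma sq_log_succ_sub_quarter_le_theta_of_lt {N : ℕ} (h₅ : 5 ≤ N) (h₁₀₂₃ : N < 1023) :
    (log (N + 1) - 1 / 4) ^ 2 ≤ Chebyshev.theta N := by
  have hx : (2 : ℝ) ≤ N + 1 := by norm_cast; omega
  have hle {b : ℕ} (hb : N < b) : (N : ℝ) + 1 ≤ b := by exact_mod_cast hb
  rcases lt_or_ge N 7 with h₇ | h₇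
  · refine (sq_log_sub_quarter_le_log (P := primorial 5) (t := 1) (A := 3) (s := 6) (B := 29) hx
      (hle h₇) (by norm_num) (by norm_num) (by norm_num) (by decide) (by norm_num)).trans ?_
    exact log_primorial_le_theta h₅
  rcases lt_or_ge N 11 with h₁₁ | h₁₁
  · refine (sq_log_sub_quarter_le_log (P := primorial 7) (t := 2) (A := 7) (s := 1) (B := 7) hx
      (hle h₁₁) (by norm_num) (by norm_num) (by norm_num) (by decide) (by norm_num)).trans ?_
    exact log_primorial_le_theta h₇
  rcases lt_or_ge N 19 with h₁₉ | h₁₉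
  · refine (sq_log_sub_quarter_le_log (P := primorial 11) (t := 3) (A := 13) (s := 1) (B := 11)
      hx (hle h₁₉) (by norm_num) (by norm_num) (by norm_num) (by decide) (by norm_num)).trans ?_
    exact log_primorial_le_theta h₁₁
  rcases lt_or_ge N 67 with h₆₇ | h₆₇
  · refine (sq_log_sub_quarter_le_log (P := primorial 19) (t := 9) (A := 55) (s := 1) (B := 23)
      hx (hle h₆₇) (by norm_num) (by norm_num) (by norm_num) (by decide) (by norm_num)).trans ?_
    exact log_primorial_le_theta h₁₉
  · refine (sq_log_sub_quarter_le_log (P := primorial 67) (t := 1) (A := 10) (s := 1) (B := 82)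
      hx (hle h₁₀₂₃) (by norm_num) (by norm_num) (by norm_num) (by decide) (by norm_num)).trans ?_
    exact log_primorial_le_theta h₆₇

lemma sq_log_add_log_add_two_sqrt_mul_log_le {x : ℝ} (hx : 1024 ≤ x) :
    log x ^ 2 + log x + 2 * √x * log x ≤ (x - 1) * log 2 := by
  set u := √√x
  have hu₀ : 0 ≤ u := sqrt_nonneg _
  have hu₂ : u ^ 2 = √x := sq_sqrt (sqrt_nonneg x)
  have hu₄ : u ^ 4 = x := by rw [show u ^ 4 = (u ^ 2) ^ 2 by ring, hu₂, sq_sqrt (by linarith)]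
  have hu : 11 / 2 ≤ u := le_of_pow_le_pow_left₀ four_ne_zero hu₀ (by rw [hu₄]; linarith)
  have hlog_nonneg : 0 ≤ log x := log_nonneg (by linarith)
  have hlog : log x ≤ 3 / 2 * u := by
    have h₁ : log x = 4 * log u := by rw [← hu₄, log_pow]; norm_num
    have h₂ := log_le_div_exp_one (by linarith : 0 < u)
    have h₃ : u / exp 1 ≤ 3 / 8 * u := by
      rw [div_le_iff₀ (exp_pos 1)]
      nlinarith [exp_one_gt_d9]
    linarith
  have h₁ : log x ^ 2 ≤ (3 / 2 * u) ^ 2 := pow_le_pow_left₀ hlog_nonneg hlog 2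
  have h₂ : u ^ 2 * log x ≤ u ^ 2 * (3 / 2 * u) := mul_le_mul_of_nonneg_left hlog (sq_nonneg u)
  have h₃ : (x - 1) * 0.6931471803 ≤ (x - 1) * log 2 :=
    mul_le_mul_of_nonneg_left log_two_gt_d9.le (by linarith)
  have hv : 0 ≤ u - 11 / 2 := by linarith
  have hpoly : (3 / 2 * u) ^ 2 + 3 / 2 * u + 2 * (u ^ 2 * (3 / 2 * u)) ≤
      (u ^ 4 - 1) * 0.6931471803 := by
    nlinarith [mul_nonneg hv (pow_nonneg hu₀ 3), mul_nonneg hv (pow_nonneg hu₀ 2),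
      mul_nonneg hv hu₀]
  rw [hu₄] at hpoly
  rw [← hu₂]
  linarith

lemma sq_log_succ_sub_quarter_le_theta_of_ge {N : ℕ} (hN : 1023 ≤ N) :
    (log (N + 1) - 1 / 4) ^ 2 ≤ Chebyshev.theta N := by
  have hx : (1024 : ℝ) ≤ N + 1 := by norm_cast; omega
  have hchebyshev := Chebyshev.theta_ge N
  have hanalytic := sq_log_add_log_add_two_sqrt_mul_log_le hx
  have hlog : log N ≤ log (N + 1) := log_le_log (by positivity) (by linarith)
  have hsqrt : √(N : ℝ) ≤ √(N + 1) := sqrt_le_sqrt (by linarith)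
  have hmono : √(N : ℝ) * log N ≤ √(N + 1) * log (N + 1) :=
    mul_le_mul hsqrt hlog (log_natCast_nonneg N) (sqrt_nonneg _)
  have hquarter : 1 / 8 ≤ log (N + 1) := by
    linarith [log_le_log two_pos (by linarith : (2 : ℝ) ≤ N + 1), log_two_gt_d9]
  nlinarith

lemma log_succ_le_max_sqrt_theta_add (N : ℕ) :
    log (N + 1) ≤ max √(Chebyshev.theta N) (3 / 2) + 1 / 4 := by
  rcases lt_or_ge N 5 with h₅ | h₅
  · have hN : (N : ℝ) + 1 ≤ 5 := by norm_cast
    have h := log_le_of_pow_le_two_pow (t := 2) (A := 5) (by positivity) two_ne_zero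
      (by nlinarith : ((N : ℝ) + 1) ^ 2 ≤ 2 ^ 5)
    norm_num at h
    linarith [log_two_lt_d9, le_max_right √(Chebyshev.theta N) (3 / 2)]
  · have h : (log (N + 1) - 1 / 4) ^ 2 ≤ Chebyshev.theta N := by
      rcases lt_or_ge N 1023 with h₁₀₂₃ | h₁₀₂₃
      · exact sq_log_succ_sub_quarter_le_theta_of_lt h₅ h₁₀₂₃
      · exact sq_log_succ_sub_quarter_le_theta_of_ge h₁₀₂₃
    linarith [le_abs_self (log (N + 1) - 1 / 4), abs_le_sqrt h,
      le_max_left √(Chebyshev.theta N) (3 / 2)]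

lemma theta_eq_sum_primesBelow (n : ℕ) : θ n = ∑ r ∈ Nat.primesBelow (p (n + 1)), log r := by
  induction n with
  | zero => simp [θ, p, Nat.nth_prime_zero_eq_two]
  | succ n ih =>
    rw [θ, Finset.sum_Icc_succ_top (by omega), ← θ, ih]
    simp only [p, Nat.add_sub_cancel, Nat.primesBelow]
    rw [Nat.filter_range_nth_eq_insert_of_infinite Nat.infinite_setOfPred_prime,
      Finset.sum_insert (by simp), add_comm]

lemma theta_eq_chebyshev_theta (n : ℕ) : θ n = Chebyshev.theta (p (n + 1) - 1 : ℕ) := by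
  rw [theta_eq_sum_primesBelow, Chebyshev.theta_eq_sum_primesLE_log,
    Nat.primesBelow_eq_primesLE_sub_one]

lemma log_p_succ_le (n : ℕ) : log (p (n + 1)) ≤ max √(θ n) (3 / 2) + 1 / 4 := by
  have hp : ((p (n + 1) - 1 : ℕ) : ℝ) + 1 = p (n + 1) := by
    have := (Nat.prime_nth_prime n).one_lt
    rw [Nat.cast_sub (by simp [p]; omega)]
    ring
  rw [theta_eq_chebyshev_theta, ← hp]
  exact log_succ_le_max_sqrt_theta_add _

lemma exists_lt_le_add_of_le_add {u : ℕ → ℝ} {f : ℝ → ℝ} (hf : Monotone f) {a : ℝ}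
    (h₀ : u 0 ≤ a) (hu : ∃ n, a < u n) (hstep : ∀ n, u (n + 1) ≤ u n + f (u n)) :
    ∃ n, 0 < n ∧ a < u n ∧ u n ≤ a + f a := by
  classical
  obtain ⟨m, hm⟩ : ∃ m, Nat.find hu = m + 1 :=
    Nat.exists_eq_succ_of_ne_zero fun h ↦ (h ▸ Nat.find_spec hu).not_ge h₀
  have hum : u m ≤ a := not_lt.mp (Nat.find_min hu (by omega))
  refine ⟨m + 1, m.succ_pos, hm ▸ Nat.find_spec hu, ?_⟩
  linarith [hstep m, hf hum]

lemma natCast_mul_log_two_le_theta (n : ℕ) : n * log 2 ≤ θ n := by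
  simpa [θ] using Finset.card_nsmul_le_sum (Finset.Icc 1 n) _ (log 2) fun i _ ↦
    log_le_log two_pos (by exact_mod_cast (Nat.prime_nth_prime (i - 1)).two_le)

lemma exists_theta_mem_Ioc {a : ℝ} (ha : 9 / 4 ≤ a) :
    ∃ n, 1 ≤ n ∧ θ n ∈ Set.Ioc a ((√a + 1 / 2) ^ 2) := by
  have hunbounded : ∃ n, a < θ n := by
    obtain ⟨n, hn⟩ := exists_nat_gt (a / log 2)
    exact ⟨n, ((div_lt_iff₀ (log_pos one_lt_two)).mp hn).trans_le
      (natCast_mul_log_two_le_theta n)⟩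
  have hmono : Monotone fun t ↦ max √t (3 / 2) + 1 / 4 :=
    fun s t hst ↦ by dsimp only; gcongr
  obtain ⟨n, hn, hlt, hle⟩ := exists_lt_le_add_of_le_add hmono (by simp [θ]; linarith)
    hunbounded fun n ↦ by
      rw [θ, Finset.sum_Icc_succ_top (by omega), ← θ]
      linarith [log_p_succ_le n]
  have hsqrt : 3 / 2 ≤ √a := le_sqrt_of_sq_le (by linarith)
  refine ⟨n, hn, hlt, hle.trans_eq ?_⟩
  rw [max_eq_left hsqrt, add_sq, sq_sqrt (by linarith)]
  ring

theorem stmt17 : ∀ m : ℕ, 2 ≤ m →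
    (∃ n : ℕ, 1 ≤ n ∧ ((m : ℝ) - 1/2)^2 < θ n ∧ θ n ≤ (m : ℝ)^2) ∧
    (∃ n : ℕ, 1 ≤ n ∧ (m : ℝ)^2 < θ n ∧ θ n ≤ ((m : ℝ) + 1/2)^2) := by
  intro m hm
  have hm : (2 : ℝ) ≤ m := by exact_mod_cast hm
  constructor
  · obtain ⟨n, hn, hθ⟩ := exists_theta_mem_Ioc (a := ((m : ℝ) - 1 / 2) ^ 2) (by nlinarith)
    rw [sqrt_sq (by linarith), sub_add_cancel] at hθ
    exact ⟨n, hn, hθ⟩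
  · obtain ⟨n, hn, hθ⟩ := exists_theta_mem_Ioc (a := (m : ℝ) ^ 2) (by nlinarith)
    rw [sqrt_sq (by linarith)] at hθ
    exact ⟨n, hn, hθ⟩
end

section
/- θ-analogue of the Firoozbakht conjecture: for all n ≥ 4, (θ_{n+1})^{1/(n+1)} < (θ_n)^{1/n}, equivalently n ln θ_{n+1} < (n+1) ln θ_n, where θ_n = ∑_{i=1}^n ln(p_i). -/
/-!
Write `a = θ n` and `L = log (p (n + 1))`, so that `θ (n + 1) = a + L`. The claim is
`(a + L) ^ n < a ^ (n + 1)`, and since `(1 + L / a) ^ n ≤ exp (n * L / a)` this holds as soon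
as `n * L < a * log a`. For `n ≥ 20` that follows from the crude bounds
`θ n ≥ log (n + 1)! ≥ (n + 1) * (log (n + 1) - 1)` (as `p i ≥ i + 1`) and
`p (n + 1) ≤ (n + 1) ^ 2` (Chebyshev's lower bound for `π`). For `4 ≤ n < 20`, `θ n` is the
logarithm of a product of explicit primes, and decimal bounds `lo / 10 ≤ θ n`,
`θ (n + 1) ≤ hi / 10` with `(hi / 10) ^ n < (lo / 10) ^ (n + 1)` are checked in integer
arithmetic from `2.7182818283 < e < 2.7182818286`.
-/

open Real Finset

lemma rpow_one_div_succ_lt_of_pow_lt {x y : ℝ} (hx : 0 ≤ x) (hy : 0 ≤ y) {n : ℕ}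
    (hn : 0 < n) (h : x ^ n < y ^ (n + 1)) : x ^ ((1 : ℝ) / (n + 1)) < y ^ ((1 : ℝ) / n) := by
  have hn' : (0 : ℝ) < n := by exact_mod_cast hn
  have hx' : x ^ ((1 : ℝ) / (n + 1)) = (x ^ n) ^ ((1 : ℝ) / (n * (n + 1))) := by
    rw [← rpow_natCast, ← rpow_mul hx]; field_simp
  have hy' : y ^ ((1 : ℝ) / n) = (y ^ (n + 1)) ^ ((1 : ℝ) / (n * (n + 1))) := by
    rw [← rpow_natCast, ← rpow_mul hy]; push_cast; field_simp
  rw [hx', hy']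
  exact rpow_lt_rpow (by positivity) h (by positivity)

lemma add_rpow_one_div_succ_lt {a L : ℝ} {n : ℕ} (hn : 0 < n) (ha : 1 < a) (hL : 0 ≤ L)
    (h : n * L < a * log a) : (a + L) ^ ((1 : ℝ) / (n + 1)) < a ^ ((1 : ℝ) / n) := by
  have ha0 : 0 < a := one_pos.trans ha
  refine rpow_one_div_succ_lt_of_pow_lt (by positivity) ha0.le hn ?_
  have hexp : (1 + L / a) ^ n < a := calc
    (1 + L / a) ^ n ≤ exp (L / a) ^ n :=
      pow_le_pow_left₀ (by positivity) (by linarith [add_one_le_exp (L / a)]) n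
    _ = exp (n * L / a) := by rw [← exp_nat_mul, mul_div_assoc]
    _ < exp (log a) := exp_lt_exp.2 ((div_lt_iff₀ ha0).2 (by linarith))
    _ = a := exp_log ha0
  calc (a + L) ^ n = a ^ n * (1 + L / a) ^ n := by
        rw [← mul_pow, mul_add, mul_one, mul_div_cancel₀ _ ha0.ne']
    _ < a ^ n * a := mul_lt_mul_of_pos_left hexp (by positivity)
    _ = a ^ (n + 1) := (pow_succ a n).symm

lemma div_le_log_of_exp_one_pow_le {x : ℝ} {k d : ℕ} (hd : 0 < d)
    (h : exp 1 ^ k ≤ x ^ d) : (k : ℝ) / d ≤ log x := by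
  rw [div_le_iff₀ (by exact_mod_cast hd), mul_comm, ← log_pow]
  calc (k : ℝ) = log (exp 1 ^ k) := by rw [← exp_nat_mul, mul_one, log_exp]
    _ ≤ log (x ^ d) := log_le_log (by positivity) h

lemma log_le_div_of_le_exp_one_pow {x : ℝ} {k d : ℕ} (hx : 0 < x) (hd : 0 < d)
    (h : x ^ d ≤ exp 1 ^ k) : log x ≤ k / d := by
  rw [le_div_iff₀ (by exact_mod_cast hd), mul_comm, ← log_pow]
  calc log (x ^ d) ≤ log (exp 1 ^ k) := log_le_log (by positivity) h
    _ = k := by rw [← exp_nat_mul, mul_one, log_exp]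

lemma exp_one_pow_le_of_decimal {k N : ℕ} (h : 27182818286 ^ k ≤ N * 10 ^ (10 * k)) :
    exp 1 ^ k ≤ N := by
  have h' : ((27182818286 : ℝ) / 10 ^ 10) ^ k ≤ N := by
    rw [div_pow, div_le_iff₀ (by positivity), ← pow_mul]; exact_mod_cast h
  refine le_trans (pow_le_pow_left₀ (exp_pos 1).le ?_ k) h'
  linarith [exp_one_lt_d9]

lemma le_exp_one_pow_of_decimal {k N : ℕ} (h : N * 10 ^ (10 * k) ≤ 27182818283 ^ k) :
    (N : ℝ) ≤ exp 1 ^ k := by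
  have h' : (N : ℝ) ≤ ((27182818283 : ℝ) / 10 ^ 10) ^ k := by
    rw [div_pow, le_div_iff₀ (by positivity), ← pow_mul]; exact_mod_cast h
  refine h'.trans (pow_le_pow_left₀ (by positivity) ?_ k)
  linarith [exp_one_gt_d9]

lemma mul_log_sub_one_le_log_factorial (m : ℕ) : m * (log m - 1) ≤ log (m.factorial : ℝ) := by
  rcases m.eq_zero_or_pos with rfl | hm
  · simp
  have h := pow_div_factorial_le_exp (m : ℝ) (by positivity) m
  rw [div_le_iff₀ (by positivity)] at h
  have := log_le_log (by positivity) h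
  rw [log_pow, log_mul (by positivity) (by positivity), log_exp] at this
  linarith

lemma succ_sq_le_two_pow (n : ℕ) (hn : 6 ≤ n) : (n + 1) ^ 2 ≤ 2 ^ n := by
  induction n, hn using Nat.le_induction with
  | base => norm_num
  | succ n hn ih => rw [pow_succ 2 n]; nlinarith

lemma nth_prime_le_succ_sq (n : ℕ) (hn : 6 ≤ n) : Nat.nth Nat.Prime n ≤ (n + 1) ^ 2 := by
  set N := (n + 1) ^ 2
  have hn0 : (0 : ℝ) < n := by exact_mod_cast (by omega : 0 < n)
  have hlog2 : 0 < log 2 := log_pos one_lt_two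
  have hN_eq : (N : ℝ) = (n + 1) ^ 2 := by push_cast [N]; rfl
  have hN : (N : ℝ) ≤ 2 ^ n := by exact_mod_cast succ_sq_le_two_pow n hn
  have hlogN : log N ≤ n * log 2 := by
    rw [← log_pow]; exact log_le_log (by positivity) hN
  have hlogN1 : log (N + 1) ≤ (n + 1) * log 2 := by
    have : (N : ℝ) + 1 ≤ 2 ^ (n + 1) := by
      rw [pow_succ]; linarith [one_le_pow₀ (M₀ := ℝ) one_le_two (n := n)]
    calc log (N + 1) ≤ log (2 ^ (n + 1)) := log_le_log (by positivity) this
      _ = (n + 1) * log 2 := by rw [log_pow]; push_cast; ring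
  have hlogN_pos : 0 < log N := log_pos (by rw [hN_eq]; nlinarith)
  have hπ : (n : ℝ) < Nat.primeCounting N := by
    refine lt_of_lt_of_le ?_ (Chebyshev.pi_ge N)
    rw [lt_div_iff₀ hlogN_pos]
    nlinarith [mul_le_mul_of_nonneg_left hlogN hn0.le, mul_pos hn0 hlog2]
  exact Nat.le_of_lt_succ (Nat.nth_lt_of_lt_count (by exact_mod_cast hπ))

lemma p_succ (n : ℕ) : p (n + 1) = Nat.nth Nat.Prime n := rfl

lemma theta_succ (n : ℕ) : θ (n + 1) = θ n + log (p (n + 1)) :=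
  (sum_Icc_succ_top (by omega) _).trans rfl

lemma log_factorial_succ_le_theta (n : ℕ) : log ((n + 1).factorial : ℝ) ≤ θ n := by
  induction n with
  | zero => simp [θ]
  | succ n ih =>
    have hp : ((n + 2 : ℕ) : ℝ) ≤ p (n + 1) := by
      exact_mod_cast p_succ n ▸ Nat.add_two_le_nth_prime n
    rw [theta_succ, Nat.factorial_succ, Nat.cast_mul, log_mul (by positivity) (by positivity),
      add_comm]
    exact add_le_add ih (log_le_log (by positivity) hp)

lemma theta_eq_log_prod_primes_lt (n : ℕ) :
    θ n = log ((∏ q ∈ range (Nat.nth Nat.Prime n) with q.Prime, q : ℕ) : ℝ) := by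
  induction n with
  | zero =>
    have : ∏ q ∈ range 2 with q.Prime, q = 1 := by decide
    simp [θ, Nat.nth_prime_zero_eq_two, this]
  | succ n ih =>
    have hpos : 0 < ∏ q ∈ range (Nat.nth Nat.Prime n) with q.Prime, q :=
      prod_pos fun q hq => (mem_filter.1 hq).2.pos
    rw [theta_succ, ih, Nat.filter_range_nth_eq_insert_of_infinite Nat.infinite_setOfPred_prime,
      prod_insert (by simp), Nat.cast_mul,
      log_mul (by exact_mod_cast (Nat.prime_nth_prime n).ne_zero) (by exact_mod_cast hpos.ne'),
      add_comm, p_succ]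

lemma theta_succ_rpow_lt_of_bounds {n q lo hi : ℕ} (hn : 0 < n) (hq : q.Prime)
    (hcount : Nat.count Nat.Prime q = n)
    (hlo : 27182818286 ^ lo ≤ (∏ r ∈ range q with r.Prime, r) ^ 10 * 10 ^ (10 * lo))
    (hhi : ((∏ r ∈ range q with r.Prime, r) * q) ^ 10 * 10 ^ (10 * hi) ≤ 27182818283 ^ hi)
    (hkey : hi ^ n * 10 < lo ^ (n + 1)) :
    θ (n + 1) ^ ((1 : ℝ) / (n + 1)) < θ n ^ ((1 : ℝ) / n) := by
  set P := ∏ r ∈ range q with r.Prime, r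
  have hnth : Nat.nth Nat.Prime n = q := hcount ▸ Nat.nth_count hq
  have hP : 0 < P := prod_pos fun r hr => (mem_filter.1 hr).2.pos
  have hθ : θ n = log P := by rw [theta_eq_log_prod_primes_lt, hnth]
  have hθ_succ : θ (n + 1) = log ((P * q : ℕ) : ℝ) := by
    rw [theta_succ, hθ, p_succ, hnth, Nat.cast_mul,
      log_mul (by positivity) (by exact_mod_cast hq.ne_zero)]
  have hlo' : (lo : ℝ) / 10 ≤ θ n := hθ ▸ div_le_log_of_exp_one_pow_le (by norm_num)
    (by exact_mod_cast exp_one_pow_le_of_decimal hlo)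
  have hhi' : θ (n + 1) ≤ (hi : ℝ) / 10 := hθ_succ ▸ log_le_div_of_le_exp_one_pow
    (by exact_mod_cast (Nat.mul_pos hP hq.pos)) (by norm_num)
    (by exact_mod_cast le_exp_one_pow_of_decimal hhi)
  have hθ_le : θ n ≤ θ (n + 1) := by
    rw [theta_succ, p_succ, hnth]
    exact le_add_of_nonneg_right (log_nonneg (by exact_mod_cast hq.one_lt.le))
  have hkey' : ((hi : ℝ) / 10) ^ n < ((lo : ℝ) / 10) ^ (n + 1) := by
    rw [div_pow, div_pow, div_lt_div_iff₀ (by positivity) (by positivity), pow_succ 10 n]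
    have : ((hi : ℝ) ^ n * 10) < lo ^ (n + 1) := by exact_mod_cast hkey
    nlinarith [pow_pos (by norm_num : (0 : ℝ) < 10) n]
  have hlo_pos : (0 : ℝ) < lo / 10 := by
    have : 0 < lo := Nat.pos_of_ne_zero (by rintro rfl; simp at hkey)
    positivity
  refine rpow_one_div_succ_lt_of_pow_lt (by linarith) (by linarith) hn ?_
  calc θ (n + 1) ^ n ≤ ((hi : ℝ) / 10) ^ n := pow_le_pow_left₀ (by linarith) hhi' n
    _ < ((lo : ℝ) / 10) ^ (n + 1) := hkey'
    _ ≤ θ n ^ (n + 1) := pow_le_pow_left₀ hlo_pos.le hlo' _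

lemma theta_succ_rpow_lt_of_lt_twenty (n : ℕ) (h4 : 4 ≤ n) (h20 : n < 20) :
    θ (n + 1) ^ ((1 : ℝ) / (n + 1)) < θ n ^ ((1 : ℝ) / n) := by
  -- `q = p (n + 1)`, `lo = ⌊10 θ n⌋` and `hi = ⌈10 θ (n + 1)⌉`
  interval_cases n
  · apply theta_succ_rpow_lt_of_bounds (q := 11) (lo := 53) (hi := 78) <;> decide +kernel
  · apply theta_succ_rpow_lt_of_bounds (q := 13) (lo := 77) (hi := 104) <;> decide +kernel
  · apply theta_succ_rpow_lt_of_bounds (q := 17) (lo := 103) (hi := 132) <;> decide +kernel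
  · apply theta_succ_rpow_lt_of_bounds (q := 19) (lo := 131) (hi := 161) <;> decide +kernel
  · apply theta_succ_rpow_lt_of_bounds (q := 23) (lo := 160) (hi := 193) <;> decide +kernel
  · apply theta_succ_rpow_lt_of_bounds (q := 29) (lo := 192) (hi := 226) <;> decide +kernel
  · apply theta_succ_rpow_lt_of_bounds (q := 31) (lo := 225) (hi := 261) <;> decide +kernel
  · apply theta_succ_rpow_lt_of_bounds (q := 37) (lo := 260) (hi := 297) <;> decide +kernel
  · apply theta_succ_rpow_lt_of_bounds (q := 41) (lo := 296) (hi := 334) <;> decide +kernel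
  · apply theta_succ_rpow_lt_of_bounds (q := 43) (lo := 333) (hi := 372) <;> decide +kernel
  · apply theta_succ_rpow_lt_of_bounds (q := 47) (lo := 371) (hi := 410) <;> decide +kernel
  · apply theta_succ_rpow_lt_of_bounds (q := 53) (lo := 409) (hi := 450) <;> decide +kernel
  · apply theta_succ_rpow_lt_of_bounds (q := 59) (lo := 449) (hi := 491) <;> decide +kernel
  · apply theta_succ_rpow_lt_of_bounds (q := 61) (lo := 490) (hi := 532) <;> decide +kernel
  · apply theta_succ_rpow_lt_of_bounds (q := 67) (lo := 531) (hi := 574) <;> decide +kernel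
  · apply theta_succ_rpow_lt_of_bounds (q := 71) (lo := 573) (hi := 616) <;> decide +kernel

lemma theta_succ_rpow_lt_of_twenty_le (n : ℕ) (hn : 20 ≤ n) :
    θ (n + 1) ^ ((1 : ℝ) / (n + 1)) < θ n ^ ((1 : ℝ) / n) := by
  set m : ℝ := n + 1 with hm
  have hnm : (n : ℝ) < m := by linarith
  have hm21 : 21 ≤ m := by rw [hm]; exact_mod_cast (by omega : 21 ≤ n + 1)
  have hlog_m : 3 < log m := by
    rw [lt_log_iff_exp_lt (by positivity)]
    calc exp 3 = exp 1 ^ 3 := by rw [← exp_nat_mul]; norm_num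
      _ < 2.7182818286 ^ 3 := pow_lt_pow_left₀ exp_one_lt_d9 (exp_pos 1).le (by norm_num)
      _ < 21 := by norm_num
      _ ≤ m := hm21
  have hθ : m * (log m - 1) ≤ θ n := by
    have := mul_log_sub_one_le_log_factorial (n + 1)
    push_cast at this
    exact this.trans (log_factorial_succ_le_theta n)
  have hm_le_θ : m ≤ θ n := by nlinarith
  have hL0 : 0 ≤ log (p (n + 1)) :=
    log_nonneg (by exact_mod_cast (Nat.prime_nth_prime n).one_lt.le)
  have hL : log (p (n + 1)) ≤ 2 * log m := by
    calc log (p (n + 1)) ≤ log (m ^ 2) :=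
          log_le_log (by exact_mod_cast (Nat.prime_nth_prime n).pos)
            (by rw [hm]; exact_mod_cast nth_prime_le_succ_sq n (by omega))
      _ = 2 * log m := by rw [log_pow]; norm_num
  rw [theta_succ]
  refine add_rpow_one_div_succ_lt (by omega) (by linarith) hL0 ?_
  calc n * log (p (n + 1)) ≤ n * (2 * log m) := by gcongr
    _ < m * (2 * log m) := by gcongr
    _ ≤ m * (log m - 1) * log m := by
      nlinarith [mul_nonneg (mul_nonneg (by linarith : 0 ≤ m) (by linarith : 0 ≤ log m))
        (by linarith : 0 ≤ log m - 3)]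
    _ ≤ θ n * log (θ n) :=
      mul_le_mul hθ (log_le_log (by positivity) hm_le_θ) (by linarith) (by linarith)

theorem stmt18 : ∀ n : ℕ, 4 ≤ n →
    θ (n+1) ^ ((1 : ℝ)/(n+1)) < θ n ^ ((1 : ℝ)/n) := by
  intro n hn
  rcases lt_or_ge n 20 with h | h
  · exact theta_succ_rpow_lt_of_lt_twenty n hn h
  · exact theta_succ_rpow_lt_of_twenty_le n h
end
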